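/- Let p be a nonzero integer and let s₀ ∈ ℂ with s₀ ∉ {0, 1, −1} satisfy A_{4_1}(s₀^{−p}, s₀) = 0, where A_{4_1}(L,M) = L²M⁴ + L(−M⁸ − 1 + M⁶ + M² + 2M⁴) + M⁴. Then the complex number 2(s₀² − s₀ + 1)/(s₀ − 1)² is an algebraic integer. -/

import Mathlib

/-!
With `t = s₀ + s₀⁻¹` the torsion is `2 + 2 / (t - 2)`, and the A-polynomial equation at
`L = s₀ ^ (-p)` says that `t` is a root of `P = C_p - (X⁴ - 5X² + 2)`, where `C_p` is the
Chebyshev polynomial normalised by `C_p (s + s⁻¹) = s ^ p + s ^ (-p)`. Substituting `t = 2 + 2y`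
gives an integer polynomial in `y` with constant term `P(2) = 4` and linear coefficient
`2 P'(2) = 2 (p² - 12)`. For even `p` all its coefficients are divisible by `4`; for odd `p`,
`P(-2) = 0`, and removing the factor `X + 2` leaves constant term `1`. Either way `y` is a root of
an integer polynomial with constant term `1`, so `1 / y = 2 / (t - 2)` is a root of its monic
reversal.
-/

open Polynomial

/-- The A-polynomial of the figure-eight knot, as a function on `ℂ × ℂ`. -/
noncomputable def A41 (L M : ℂ) : ℂ :=
  L ^ 2 * M ^ 4 + L * (-M ^ 8 - 1 + M ^ 6 + M ^ 2 + 2 * M ^ 4) + M ^ 4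

namespace Polynomial.Chebyshev

theorem C_eval_add_inv {K : Type*} [Field K] {x : K} (hx : x ≠ 0) (n : ℤ) :
    (C K n).eval (x + x⁻¹) = x ^ n + x ^ (-n) := by
  induction n using Chebyshev.induct with
  | zero => norm_num
  | one => simp
  | add_two n ih1 ih2 =>
    rw [C_add_two, eval_sub, eval_mul, eval_X, ih1, ih2]
    simp only [neg_add, zpow_add₀ hx, zpow_neg, zpow_ofNat]
    field_simp
    ring
  | neg_add_one n ih1 ih2 =>
    rw [C_sub_one, eval_sub, eval_mul, eval_X, ih1, ih2]
    simp only [neg_add, neg_sub, neg_neg, zpow_add₀ hx, zpow_sub₀ hx, zpow_neg, zpow_one]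
    field_simp
    ring

theorem derivative_C_eval_two {R : Type*} [CommRing R] (n : ℤ) :
    (derivative (C R n)).eval 2 = n ^ 2 := by
  induction n using Chebyshev.induct with
  | zero => simp
  | one => simp
  | add_two n ih1 ih2 =>
    simp only [C_add_two, derivative_sub, derivative_mul, derivative_X, one_mul, eval_sub,
      eval_add, eval_mul, eval_X, C_eval_two, ih1, ih2]
    push_cast
    ring
  | neg_add_one n ih1 ih2 =>
    simp only [C_sub_one, derivative_sub, derivative_mul, derivative_X, one_mul, eval_sub,
      eval_add, eval_mul, eval_X, C_eval_two, ih1, ih2]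
    push_cast
    ring

end Polynomial.Chebyshev

section Integrality

variable {R K : Type*} [CommRing R] [Field K] [Algebra R K]

theorem isIntegral_inv_of_aeval_eq_zero_of_coeff_zero_eq_one {P : R[X]} (hP : P.coeff 0 = 1)
    {y : K} (hy : aeval y P = 0) : IsIntegral R y⁻¹ := by
  have : Nontrivial R := (algebraMap R K).domain_nontrivial
  have hy0 : y ≠ 0 := by
    rintro rfl
    rw [← coeff_zero_eq_aeval_zero', hP, map_one] at hy
    exact one_ne_zero hy
  let := invertibleOfNonzero hy0
  refine ⟨P.reverse, ?_, ?_⟩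
  · rw [Monic, reverse_leadingCoeff, trailingCoeff_eq_coeff_zero (by simp [hP]), hP]
  · rw [← invOf_eq_inv, eval₂_reverse_eq_zero_iff]
    exact hy

theorem aeval_taylor_comp_C_mul_X (P : R[X]) (a : R) (y : K) :
    aeval y ((taylor a P).comp (C a * X)) = aeval (algebraMap R K a * y + algebraMap R K a) P := by
  simp [taylor_apply, aeval_comp]

theorem isIntegral_div_sub_of_eval_eq_one {P : R[X]} {a : R} (hP : P.eval a = 1)
    (ha : algebraMap R K a ≠ 0) {t : K} (ht : aeval t P = 0) :
    IsIntegral R (algebraMap R K a / (t - algebraMap R K a)) := by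
  rw [← inv_div]
  refine isIntegral_inv_of_aeval_eq_zero_of_coeff_zero_eq_one (P := (taylor a P).comp (C a * X))
    (by simpa using hP) ?_
  rw [aeval_taylor_comp_C_mul_X, mul_div_cancel₀ _ ha, sub_add_cancel, ht]

theorem C_sq_dvd_taylor_comp_C_mul_X {P : R[X]} {a : R} (h₀ : a ^ 2 ∣ P.eval a)
    (h₁ : a ∣ (derivative P).eval a) : C (a ^ 2) ∣ (taylor a P).comp (C a * X) := by
  refine (C_dvd_iff_dvd_coeff _ _).mpr fun k ↦ ?_
  rw [comp_C_mul_X_coeff]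
  rcases k with _ | _ | k
  · simpa using h₀
  · simpa [sq] using mul_dvd_mul h₁ (dvd_refl a)
  · exact Dvd.intro (a ^ k * (taylor a P).coeff (k + 2)) (by ring)

theorem isIntegral_div_sub_of_eval_eq_sq [IsDomain R] {P : R[X]} {a : R} (hP : P.eval a = a ^ 2)
    (hP' : a ∣ (derivative P).eval a) (ha : algebraMap R K a ≠ 0) {t : K} (ht : aeval t P = 0) :
    IsIntegral R (algebraMap R K a / (t - algebraMap R K a)) := by
  obtain ⟨Q, hQ⟩ := C_sq_dvd_taylor_comp_C_mul_X (hP ▸ dvd_refl _) hP'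
  have ha₀ : a ^ 2 ≠ 0 := pow_ne_zero 2 (by rintro rfl; exact ha (map_zero _))
  rw [← inv_div]
  refine isIntegral_inv_of_aeval_eq_zero_of_coeff_zero_eq_one (P := Q) ?_ ?_
  · have := congrArg (coeff · 0) hQ
    simp only [comp_C_mul_X_coeff, taylor_coeff_zero, hP, pow_zero, mul_one, coeff_C_mul] at this
    exact (mul_eq_left₀ ha₀).mp this.symm
  · have := congrArg (aeval ((t - algebraMap R K a) / algebraMap R K a)) hQ
    rw [aeval_taylor_comp_C_mul_X, mul_div_cancel₀ _ ha, sub_add_cancel, ht, map_mul, aeval_C,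
      eq_comm, mul_eq_zero] at this
    exact this.resolve_left (by simpa using ha)

end Integrality

/-- Since `C p (s + s⁻¹) = s ^ p + s ^ (-p)` and `s⁴ + s⁻⁴ - s² - s⁻² - 2 = t⁴ - 5t² + 2` for
`t = s + s⁻¹`, the equation `A41 (s ^ (-p)) s = 0` says exactly that `t` is a root of this. -/
noncomputable def figureEightTracePoly (p : ℤ) : ℤ[X] :=
  Chebyshev.C ℤ p - (X ^ 4 - 5 * X ^ 2 + 2)

theorem aeval_figureEightTracePoly_eq_zero {p : ℤ} {s : ℂ} (hs : s ≠ 0)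
    (hA : A41 (s ^ (-p)) s = 0) : aeval (s + s⁻¹) (figureEightTracePoly p) = 0 := by
  have hsp : s ^ p ≠ 0 := zpow_ne_zero _ hs
  rw [A41, zpow_neg] at hA
  simp only [figureEightTracePoly, aeval_def, eval₂_eq_eval_map, Polynomial.map_sub,
    Chebyshev.map_C, Chebyshev.C_eval_add_inv hs, zpow_neg, Polynomial.map_add,
    Polynomial.map_pow, Polynomial.map_mul, map_X, Polynomial.map_ofNat, eval_add, eval_sub,
    eval_pow, eval_mul, eval_X, eval_ofNat]
  generalize s ^ p = L at hA hsp ⊢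
  field_simp at hA ⊢
  linear_combination hA

theorem figureEightTracePoly_eval_two (p : ℤ) : (figureEightTracePoly p).eval 2 = 4 := by
  simp [figureEightTracePoly]

theorem derivative_figureEightTracePoly_eval_two (p : ℤ) :
    (derivative (figureEightTracePoly p)).eval 2 = p ^ 2 - 12 := by
  simp [figureEightTracePoly, Chebyshev.derivative_C_eval_two]

theorem exists_figureEightTracePoly_eq_mul_of_odd {p : ℤ} (hp : Odd p) :
    ∃ Q : ℤ[X], figureEightTracePoly p = (X + 2) * Q ∧ Q.eval 2 = 1 := by
  have hroot : (figureEightTracePoly p).IsRoot (-2) := by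
    simp [figureEightTracePoly, Int.negOnePow_odd _ hp]
  have hPQ := (mul_divByMonic_eq_iff_isRoot.mpr hroot).symm
  rw [C_neg, sub_neg_eq_add, C_ofNat] at hPQ
  refine ⟨_, hPQ, ?_⟩
  have := congrArg (eval 2) hPQ
  rw [figureEightTracePoly_eval_two, eval_mul, eval_add, eval_X, eval_ofNat] at this
  omega

theorem torsion_p_surgery_isIntegral_general (p : ℤ) (s₀ : ℂ)
    (h0 : s₀ ≠ 0) (h1 : s₀ ≠ 1) (h2 : s₀ ≠ -1)
    (hA : A41 (s₀ ^ (-p)) s₀ = 0) :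
    IsIntegral ℤ (2 * (s₀ ^ 2 - s₀ + 1) / (s₀ - 1) ^ 2) := by
  have ht := aeval_figureEightTracePoly_eq_zero h0 hA
  set t := s₀ + s₀⁻¹
  have htorsion : 2 * (s₀ ^ 2 - s₀ + 1) / (s₀ - 1) ^ 2 =
      algebraMap ℤ ℂ 2 / (t - algebraMap ℤ ℂ 2) + algebraMap ℤ ℂ 2 := by
    have : s₀ - 1 ≠ 0 := sub_ne_zero.mpr h1
    have ht_sub : t - 2 = (s₀ - 1) ^ 2 / s₀ := by simp only [t]; field_simp; ring
    rw [map_ofNat, ht_sub]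
    field_simp
    ring
  have h2_ne : algebraMap ℤ ℂ 2 ≠ 0 := by simp
  rw [htorsion]
  refine .add ?_ isIntegral_algebraMap
  rcases p.even_or_odd with hp | hp
  · refine isIntegral_div_sub_of_eval_eq_sq ?_ ?_ h2_ne ht
    · rw [figureEightTracePoly_eval_two]; norm_num
    · rw [derivative_figureEightTracePoly_eval_two]
      exact dvd_sub (dvd_pow hp.two_dvd two_ne_zero) (by norm_num)
  · obtain ⟨Q, hPQ, hQ⟩ := exists_figureEightTracePoly_eq_mul_of_odd hp
    have ht_add : t + 2 ≠ 0 := by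
      have : s₀ + 1 ≠ 0 := fun h ↦ h2 (eq_neg_of_add_eq_zero_left h)
      rw [show t + 2 = (s₀ + 1) ^ 2 / s₀ by simp only [t]; field_simp; ring]
      positivity
    rw [hPQ, map_mul, mul_eq_zero, map_add, aeval_X, map_ofNat] at ht
    exact isIntegral_div_sub_of_eval_eq_one hQ h2_ne (ht.resolve_left ht_add)

/-- Theorem 1.1, case `q = 1`: the Reidemeister torsion of `p`-surgery on the
figure-eight knot is an algebraic integer. -/
theorem torsion_p_surgery_isIntegral (p : ℤ) (hp : p ≠ 0) (s₀ : ℂ)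
    (h0 : s₀ ≠ 0) (h1 : s₀ ≠ 1) (h2 : s₀ ≠ -1)
    (hA : A41 (s₀ ^ (-p)) s₀ = 0) :
    IsIntegral ℤ (2 * (s₀ ^ 2 - s₀ + 1) / (s₀ - 1) ^ 2) :=
  torsion_p_surgery_isIntegral_general p s₀ h0 h1 h2 hA
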